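/- arXiv:1702.00841 — 2 statements merged into one kernel-verified Lean document; each statement's English description precedes it below -/
import Mathlib

section
/- Let (x̂^k,λ̂^k) be generated by synchronous PDMM under Condition 1, and let (x⋆,λ⋆) be the saddle point of L_P to which the averages (x̄^K,λ̄^K) converge. If for some i∈V the iterates x̂_i^k converge to a point x′_i as k → ∞, then x′_i = x⋆_i. Similarly, if for some ordered pair [i,j] the iterates λ̂_{i|j}^k converge to a point λ′_{i|j}, then λ′_{i|j} = λ⋆_{i|j}. -/
open Matrix Finset Filter Topology

noncomputable section

/-- Fenchel conjugate of `g` at `w` (real-valued, via `iSup`). -/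
noncomputable def fconj {k : ℕ} (g : (Fin k → ℝ) → ℝ) (w : Fin k → ℝ) : ℝ :=
  ⨆ y : Fin k → ℝ, (w ⬝ᵥ y - g y)

/-- `v` is a subgradient of `g` at `x`. -/
def IsSubgradient {k : ℕ} (g : (Fin k → ℝ) → ℝ) (x v : Fin k → ℝ) : Prop :=
  ∀ y, g x + v ⬝ᵥ (y - x) ≤ g y

/-- the quadratic form `vᵀ P v`. -/
def quadForm {k : ℕ} (P : Matrix (Fin k) (Fin k) ℝ) (v : Fin k → ℝ) : ℝ := v ⬝ᵥ (P *ᵥ v)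

/-- squared Euclidean norm `‖v‖² = vᵀ v`. -/
def nsq {k : ℕ} (v : Fin k → ℝ) : ℝ := v ⬝ᵥ v

/-- `S` is the (symmetric positive semidefinite) square root of `P`. -/
def IsSqrtOf {k : ℕ} (S P : Matrix (Fin k) (Fin k) ℝ) : Prop := S.PosSemidef ∧ S * S = P

/-- The data of the distributed optimization problem on the graph `G = (V, E)`,
`V = Fin m`.  Edges are stored with their canonical orientation: `(i,j) ∈ E → i < j`
(this is the `WellFormed` predicate below).  For a canonically oriented edge
`(i,j) ∈ E`, `A i j` is the matrix `A_{ij}` (acting on `x_i`) and `B i j` is the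
matrix `A_{ji}` (acting on `x_j`); `ed i j = n_{ij}` is the edge dimension,
`nd i = n_i` the node dimension, `c i j = c_{ij}`, and `Pp i j`, `Pd i j` are
the matrices `P_{p,ij}`, `P_{d,ij}`. -/
structure PDMMData (m : ℕ) where
  nd : Fin m → ℕ
  ed : Fin m → Fin m → ℕ
  E : Finset (Fin m × Fin m)
  f : ∀ i, (Fin (nd i) → ℝ) → ℝ
  c : ∀ i j, Fin (ed i j) → ℝ
  A : ∀ i j, Matrix (Fin (ed i j)) (Fin (nd i)) ℝ
  B : ∀ i j, Matrix (Fin (ed i j)) (Fin (nd j)) ℝ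
  Pp : ∀ i j, Matrix (Fin (ed i j)) (Fin (ed i j)) ℝ
  Pd : ∀ i j, Matrix (Fin (ed i j)) (Fin (ed i j)) ℝ

namespace PDMMData

variable {m : ℕ} (D : PDMMData m)

/-- the space of primal variables `x = (x_1, …, x_m)`. -/
abbrev XSp : Type := ∀ i, Fin (D.nd i) → ℝ

/-- the space of dual variables `λ`: for a canonically oriented pair `(i,j)`,
`(Λ i j).1 = λ_{i|j}` and `(Λ i j).2 = λ_{j|i}`. -/
abbrev LamSp : Type := ∀ i j, (Fin (D.ed i j) → ℝ) × (Fin (D.ed i j) → ℝ)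

/-- the space of edge multipliers `δ`. -/
abbrev DeltaSp : Type := ∀ i j, Fin (D.ed i j) → ℝ

/-- the standing assumptions: the graph is simple with canonically oriented edges,
each `f_i` is convex and closed (lower semicontinuous; properness is automatic since
`f_i` is real-valued), and the `P` matrices are symmetric positive definite. -/
def WellFormed : Prop :=
  (∀ p ∈ D.E, p.1 < p.2) ∧
  (∀ i, ConvexOn ℝ Set.univ (D.f i)) ∧
  (∀ i, LowerSemicontinuous (D.f i)) ∧
  (∀ p ∈ D.E, (D.Pp p.1 p.2).PosDef) ∧
  (∀ p ∈ D.E, (D.Pd p.1 p.2).PosDef)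

/-- `A_iᵀ λ_i = Σ_{j ∈ N_i} A_{ij}ᵀ λ_{i|j}`. -/
def ATlamSelf (Λ : D.LamSp) (i : Fin m) : Fin (D.nd i) → ℝ :=
  ∑ j : Fin m,
    if (i, j) ∈ D.E then (D.A i j)ᵀ *ᵥ (Λ i j).1
    else if (j, i) ∈ D.E then (D.B j i)ᵀ *ᵥ (Λ j i).2
    else 0

/-- `Σ_{j ∈ N_i} A_{ij}ᵀ λ_{j|i}`. -/
def ATlamNbr (Λ : D.LamSp) (i : Fin m) : Fin (D.nd i) → ℝ :=
  ∑ j : Fin m,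
    if (i, j) ∈ D.E then (D.A i j)ᵀ *ᵥ (Λ i j).2
    else if (j, i) ∈ D.E then (D.B j i)ᵀ *ᵥ (Λ j i).1
    else 0

/-- the primal Lagrangian `L_p`. -/
def Lp (x : D.XSp) (δ : D.DeltaSp) : ℝ :=
  ∑ i, D.f i (x i) +
    ∑ p ∈ D.E, δ p.1 p.2 ⬝ᵥ (D.c p.1 p.2 - D.A p.1 p.2 *ᵥ x p.1 - D.B p.1 p.2 *ᵥ x p.2)

/-- the crossing term `Σ_{i∈V} Σ_{j∈N_i} λ_{j|i}ᵀ (A_{ij} x_i − c_{ij})`. -/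
def crossTerm (x : D.XSp) (Λ : D.LamSp) : ℝ :=
  ∑ p ∈ D.E,
    ((Λ p.1 p.2).2 ⬝ᵥ (D.A p.1 p.2 *ᵥ x p.1 - D.c p.1 p.2) +
     (Λ p.1 p.2).1 ⬝ᵥ (D.B p.1 p.2 *ᵥ x p.2 - D.c p.1 p.2))

/-- the dual Lagrangian `L_d`. -/
def Ld (δ : D.DeltaSp) (Λ : D.LamSp) (x : D.XSp) : ℝ :=
  (∑ i, -(fconj (D.f i) (D.ATlamSelf Λ i))) - D.crossTerm x Λ -
    ∑ p ∈ D.E, δ p.1 p.2 ⬝ᵥ (D.c p.1 p.2 - D.A p.1 p.2 *ᵥ x p.1 - D.B p.1 p.2 *ᵥ x p.2)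

/-- the primal-dual Lagrangian `L_{pd}`. -/
def Lpd (x : D.XSp) (Λ : D.LamSp) : ℝ :=
  ∑ i, (D.f i (x i) - fconj (D.f i) (D.ATlamSelf Λ i)) - D.crossTerm x Λ

/-- the primal penalty `h_{P_p}(x)`. -/
def penaltyP (x : D.XSp) : ℝ :=
  ∑ p ∈ D.E, (1 / 2 : ℝ) *
    quadForm (D.Pp p.1 p.2) (D.A p.1 p.2 *ᵥ x p.1 + D.B p.1 p.2 *ᵥ x p.2 - D.c p.1 p.2)

/-- the dual penalty `h_{P_d}(λ)`. -/
def penaltyD (Λ : D.LamSp) : ℝ :=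
  ∑ p ∈ D.E, (1 / 2 : ℝ) * quadForm (D.Pd p.1 p.2) ((Λ p.1 p.2).1 - (Λ p.1 p.2).2)

/-- the augmented primal-dual Lagrangian `L_𝒫`. -/
def LP (x : D.XSp) (Λ : D.LamSp) : ℝ := D.Lpd x Λ + D.penaltyP x - D.penaltyD Λ

/-- `(x, δ)` is a saddle point of `L_p`. -/
def IsSaddleLp (x : D.XSp) (δ : D.DeltaSp) : Prop :=
  ∀ x' δ', D.Lp x δ' ≤ D.Lp x δ ∧ D.Lp x δ ≤ D.Lp x' δ

/-- `(x, Λ)` is a saddle point of `L_𝒫`. -/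
def IsSaddleLP (x : D.XSp) (Λ : D.LamSp) : Prop :=
  ∀ x' Λ', D.LP x Λ' ≤ D.LP x Λ ∧ D.LP x Λ ≤ D.LP x' Λ

/-- primal feasibility: `A_{ij} x_i + A_{ji} x_j = c_{ij}` for all edges. -/
def PrimalFeasible (x : D.XSp) : Prop :=
  ∀ p ∈ D.E, D.A p.1 p.2 *ᵥ x p.1 + D.B p.1 p.2 *ᵥ x p.2 = D.c p.1 p.2

/-- dual feasibility: `λ_{i|j} = λ_{j|i}` for all edges. -/
def DualFeasible (Λ : D.LamSp) : Prop := ∀ p ∈ D.E, (Λ p.1 p.2).1 = (Λ p.1 p.2).2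

/-- `x` solves the primal problem. -/
def SolvesPrimal (x : D.XSp) : Prop :=
  D.PrimalFeasible x ∧ ∀ y : D.XSp, D.PrimalFeasible y → ∑ i, D.f i (x i) ≤ ∑ i, D.f i (y i)

/-- the dual objective `−Σ_i f_i⋆(A_iᵀλ_i) + Σ_{(i,j)∈E} δ_{ij}ᵀ c_{ij}`
(on the dual feasible set, where `δ_{ij} = λ_{i|j} = λ_{j|i}`). -/
def dualObj (Λ : D.LamSp) : ℝ :=
  (-∑ i, fconj (D.f i) (D.ATlamSelf Λ i)) + ∑ p ∈ D.E, (Λ p.1 p.2).1 ⬝ᵥ D.c p.1 p.2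

/-- `λ` solves the dual problem. -/
def SolvesDual (Λ : D.LamSp) : Prop :=
  D.DualFeasible Λ ∧ ∀ Λ' : D.LamSp, D.DualFeasible Λ' → D.dualObj Λ' ≤ D.dualObj Λ

/-- `p(x, λ) = Σ_{i∈V} [ f_i(x_i) + f_i⋆(A_iᵀλ_i) − ½ Σ_{j∈N_i} c_{ij}ᵀ λ_{i|j} ]`. -/
def pFun (x : D.XSp) (Λ : D.LamSp) : ℝ :=
  ∑ i, (D.f i (x i) + fconj (D.f i) (D.ATlamSelf Λ i)) -
    ∑ p ∈ D.E, (1 / 2 : ℝ) * (D.c p.1 p.2 ⬝ᵥ ((Λ p.1 p.2).1 + (Λ p.1 p.2).2))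

/-- the bilinear quantity
`Σ_{i∈V} Σ_{j∈N_i} [ (λ_{i|j} − λ⋆_{i|j})ᵀ(A_{ji}x_j − c_{ij}/2) − (x_i − x⋆_i)ᵀ A_{ij}ᵀ λ_{j|i} ]`. -/
def QFun (xs : D.XSp) (Λs : D.LamSp) (x : D.XSp) (Λ : D.LamSp) : ℝ :=
  ∑ p ∈ D.E,
    (((Λ p.1 p.2).1 - (Λs p.1 p.2).1) ⬝ᵥ (D.B p.1 p.2 *ᵥ x p.2 - (1 / 2 : ℝ) • D.c p.1 p.2) -
       (x p.1 - xs p.1) ⬝ᵥ ((D.A p.1 p.2)ᵀ *ᵥ (Λ p.1 p.2).2) +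
     ((Λ p.1 p.2).2 - (Λs p.1 p.2).2) ⬝ᵥ (D.A p.1 p.2 *ᵥ x p.1 - (1 / 2 : ℝ) • D.c p.1 p.2) -
       (x p.2 - xs p.2) ⬝ᵥ ((D.B p.1 p.2)ᵀ *ᵥ (Λ p.1 p.2).1))

/-- the PDMM `x`-update objective at node `i`, given the previous estimates `(xk, Λk)`. -/
def xUpdObj (xk : D.XSp) (Λk : D.LamSp) (i : Fin m) (y : Fin (D.nd i) → ℝ) : ℝ :=
  D.f i y - y ⬝ᵥ D.ATlamNbr Λk i +
    ∑ j : Fin m,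
      if (i, j) ∈ D.E then
        (1 / 2 : ℝ) * quadForm (D.Pp i j) (D.A i j *ᵥ y + D.B i j *ᵥ xk j - D.c i j)
      else if (j, i) ∈ D.E then
        (1 / 2 : ℝ) * quadForm (D.Pp j i) (D.B j i *ᵥ y + D.A j i *ᵥ xk j - D.c j i)
      else 0

/-- the PDMM `λ`-update objective at node `i`, as a function of the full dual vector `ΛV`
(it only depends on the components `λ_{i|j}`, `j ∈ N_i`, owned by node `i`). -/
def lamUpdObj (xk : D.XSp) (Λk : D.LamSp) (i : Fin m) (ΛV : D.LamSp) : ℝ :=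
  (∑ j : Fin m,
      if (i, j) ∈ D.E then
        (1 / 2 : ℝ) * quadForm (D.Pd i j) ((ΛV i j).1 - (Λk i j).2) +
          (ΛV i j).1 ⬝ᵥ (D.B i j *ᵥ xk j - D.c i j)
      else if (j, i) ∈ D.E then
        (1 / 2 : ℝ) * quadForm (D.Pd j i) ((ΛV j i).2 - (Λk j i).1) +
          (ΛV j i).2 ⬝ᵥ (D.A j i *ᵥ xk j - D.c j i)
      else 0) +
    fconj (D.f i) (D.ATlamSelf ΛV i)

/-- the auxiliary `w`-update objective at node `i` (Subsection IV-C of the paper). -/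
def wUpdObj (xk : D.XSp) (Λk : D.LamSp) (i : Fin m) (w : Fin (D.nd i) → ℝ) : ℝ :=
  D.f i w +
    (∑ j : Fin m,
      if (i, j) ∈ D.E then
        (1 / 2 : ℝ) * quadForm (D.Pd i j)⁻¹ (D.c i j - D.B i j *ᵥ xk j - D.A i j *ᵥ w)
      else if (j, i) ∈ D.E then
        (1 / 2 : ℝ) * quadForm (D.Pd j i)⁻¹ (D.c j i - D.A j i *ᵥ xk j - D.B j i *ᵥ w)
      else 0) -
    w ⬝ᵥ D.ATlamNbr Λk i

/-- one synchronous PDMM iteration: every node minimizes its `x`- and `λ`-objectives. -/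
def SynStep (xk : D.XSp) (Λk : D.LamSp) (xn : D.XSp) (Λn : D.LamSp) : Prop :=
  (∀ i, ∀ y, D.xUpdObj xk Λk i (xn i) ≤ D.xUpdObj xk Λk i y) ∧
  ∀ i, ∀ ΛV, D.lamUpdObj xk Λk i Λn ≤ D.lamUpdObj xk Λk i ΛV

/-- one asynchronous PDMM iteration at node `i`: node `i` minimizes its objectives,
all other variables stay unchanged. -/
def AsynStep (i : Fin m) (xk : D.XSp) (Λk : D.LamSp) (xn : D.XSp) (Λn : D.LamSp) : Prop :=
  (∀ y, D.xUpdObj xk Λk i (xn i) ≤ D.xUpdObj xk Λk i y) ∧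
  (∀ ΛV, D.lamUpdObj xk Λk i Λn ≤ D.lamUpdObj xk Λk i ΛV) ∧
  (∀ j, j ≠ i → xn j = xk j) ∧
  (∀ u v, u ≠ i → (Λn u v).1 = (Λk u v).1) ∧
  (∀ u v, v ≠ i → (Λn u v).2 = (Λk u v).2)

/-- Condition 1: `P_{d,ij} = P_{p,ij}⁻¹ + ΔP_{d,ij}` with `ΔP_{d,ij} ⪰ 0`. -/
def Condition1 (dP : ∀ i j, Matrix (Fin (D.ed i j)) (Fin (D.ed i j)) ℝ) : Prop :=
  ∀ p ∈ D.E, (dP p.1 p.2).PosSemidef ∧ D.Pd p.1 p.2 = (D.Pp p.1 p.2)⁻¹ + dP p.1 p.2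

/-- running averages of the primal iterates. -/
def xAvg (xh : ℕ → D.XSp) (K : ℕ) : D.XSp :=
  fun i => (K : ℝ)⁻¹ • ∑ k ∈ Finset.Icc 1 K, xh k i

/-- running averages of the dual iterates. -/
def lamAvg (Λh : ℕ → D.LamSp) (K : ℕ) : D.LamSp :=
  fun i j =>
    ((K : ℝ)⁻¹ • ∑ k ∈ Finset.Icc 1 K, (Λh k i j).1,
     (K : ℝ)⁻¹ • ∑ k ∈ Finset.Icc 1 K, (Λh k i j).2)

end PDMMData

/-- the summand `d_{i|j}^{k+1}` of Lemma 7 (as a function of the relevant vectors):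
`½( ‖S v₁ + Sq w₁‖² − ‖S v₂ + Sq w₂‖² − ‖S r + Sq s‖² + ‖SΔ w₁‖² − ‖SΔ w₂‖² − ‖SΔ s‖² )`. -/
def dPiece {k : ℕ} (S Sq SΔ : Matrix (Fin k) (Fin k) ℝ) (v1 w1 v2 w2 r s : Fin k → ℝ) : ℝ :=
  (1 / 2 : ℝ) *
    (nsq (S *ᵥ v1 + Sq *ᵥ w1) - nsq (S *ᵥ v2 + Sq *ᵥ w2) - nsq (S *ᵥ r + Sq *ᵥ s) +
      nsq (SΔ *ᵥ w1) - nsq (SΔ *ᵥ w2) - nsq (SΔ *ᵥ s))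

lemma cesaroIcc {E : Type*} [NormedAddCommGroup E] [NormedSpace ℝ E] {u : ℕ → E} {l : E}
    (h : Tendsto u atTop (𝓝 l)) :
    Tendsto (fun K : ℕ => (K : ℝ)⁻¹ • ∑ k ∈ Finset.Icc 1 K, u k) atTop (𝓝 l) := by
  have h2 := (h.comp (tendsto_add_atTop_nat 1)).cesaro_smul
  refine h2.congr fun K => ?_
  rw [← Finset.Ico_add_one_right_eq_Icc, Finset.sum_Ico_eq_sum_range]
  simp [add_comm]

/-- Corollary 1: if an individual synchronous PDMM iterate converges,
its limit is the corresponding component of the saddle point to which the running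
averages converge. -/
theorem stmt13 {m : ℕ} (D : PDMMData m) (hWF : D.WellFormed)
    (hex : ∃ (x : D.XSp) (δ : D.DeltaSp), D.IsSaddleLp x δ)
    (dPd : ∀ i j, Matrix (Fin (D.ed i j)) (Fin (D.ed i j)) ℝ)
    (hcond : D.Condition1 dPd)
    (xh : ℕ → D.XSp) (Λh : ℕ → D.LamSp)
    (hsteps : ∀ k, D.SynStep (xh k) (Λh k) (xh (k + 1)) (Λh (k + 1)))
    (xs : D.XSp) (Λs : D.LamSp) (hsaddle : D.IsSaddleLP xs Λs)
    (hxconv : Tendsto (fun K : ℕ => D.xAvg xh K) atTop (nhds xs))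
    (hlconv : Tendsto (fun K : ℕ => D.lamAvg Λh K) atTop (nhds Λs)) :
    (∀ (i : Fin m) (x' : Fin (D.nd i) → ℝ),
      Tendsto (fun k : ℕ => xh k i) atTop (nhds x') → x' = xs i) ∧
    (∀ p ∈ D.E,
      (∀ l1 : Fin (D.ed p.1 p.2) → ℝ,
        Tendsto (fun k : ℕ => (Λh k p.1 p.2).1) atTop (nhds l1) → l1 = (Λs p.1 p.2).1) ∧
      (∀ l2 : Fin (D.ed p.1 p.2) → ℝ,
        Tendsto (fun k : ℕ => (Λh k p.1 p.2).2) atTop (nhds l2) → l2 = (Λs p.1 p.2).2))  := by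
  refine ⟨fun i x' hx => tendsto_nhds_unique (cesaroIcc hx) ((tendsto_pi_nhds.mp hxconv) i),
    fun p hp => ?_⟩
  have h1 : Tendsto (fun K : ℕ => D.lamAvg Λh K p.1 p.2) atTop (𝓝 (Λs p.1 p.2)) :=
    tendsto_pi_nhds.mp (tendsto_pi_nhds.mp hlconv p.1) p.2
  exact ⟨fun l1 hl => tendsto_nhds_unique (cesaroIcc hl) ((continuous_fst.tendsto _).comp h1),
    fun l2 hl => tendsto_nhds_unique (cesaroIcc hl) ((continuous_snd.tendsto _).comp h1)⟩
end
end

section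
/- Let (x̂^k,λ̂^k) be generated by cyclic asynchronous PDMM under Condition 1, and let (x⋆,λ⋆) be the saddle point of L_P to which the segment averages (x̌^K,λ̌^K) converge. If for some u∈V the segment-end iterates x̂_u^{lm} converge to a point x′_u as l → ∞, then x′_u = x⋆_u. Similarly, if for some ordered pair [u,v] the iterates λ̂_{u|v}^{lm} converge to a point λ′_{u|v}, then λ′_{u|v} = λ⋆_{u|v}. -/
open Matrix Finset Filter Topology

noncomputable section

theorem Filter.Tendsto.cesaro_smul_Icc {E : Type*} [NormedAddCommGroup E] [NormedSpace ℝ E]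
    {f : ℕ → E} {a : E} (h : Tendsto f atTop (nhds a)) :
    Tendsto (fun K : ℕ => (K : ℝ)⁻¹ • ∑ k ∈ Finset.Icc 1 K, f k) atTop (nhds a) := by
  refine ((tendsto_add_atTop_iff_nat 1).mpr h).cesaro_smul.congr fun K => ?_
  rw [← Finset.Ico_add_one_right_eq_Icc, Finset.sum_Ico_eq_sum_range, add_tsub_cancel_right]
  simp only [add_comm 1]

theorem stmt16_general {m : ℕ} (D : PDMMData m)
    (xh : ℕ → D.XSp) (Λh : ℕ → D.LamSp)
    (xs : D.XSp) (Λs : D.LamSp)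
    (hxconv : Tendsto (fun K : ℕ => D.xAvg (fun l => xh (l * m)) K) atTop (nhds xs))
    (hlconv : Tendsto (fun K : ℕ => D.lamAvg (fun l => Λh (l * m)) K) atTop (nhds Λs)) :
    (∀ (u : Fin m) (x' : Fin (D.nd u) → ℝ),
      Tendsto (fun l : ℕ => xh (l * m) u) atTop (nhds x') → x' = xs u) ∧
    (∀ p ∈ D.E,
      (∀ l1 : Fin (D.ed p.1 p.2) → ℝ,
        Tendsto (fun l : ℕ => (Λh (l * m) p.1 p.2).1) atTop (nhds l1) → l1 = (Λs p.1 p.2).1) ∧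
      (∀ l2 : Fin (D.ed p.1 p.2) → ℝ,
        Tendsto (fun l : ℕ => (Λh (l * m) p.1 p.2).2) atTop (nhds l2) → l2 = (Λs p.1 p.2).2)) := by
  refine ⟨fun u x' hx' => tendsto_nhds_unique hx'.cesaro_smul_Icc (tendsto_pi_nhds.mp hxconv u),
    fun p _ => ?_⟩
  have hlconv_p := tendsto_pi_nhds.mp (tendsto_pi_nhds.mp hlconv p.1) p.2
  exact ⟨fun l1 hl1 => tendsto_nhds_unique hl1.cesaro_smul_Icc hlconv_p.fst_nhds,
    fun l2 hl2 => tendsto_nhds_unique hl2.cesaro_smul_Icc hlconv_p.snd_nhds⟩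

/-- Corollary 2: if an individual segment-end iterate of the cyclic
asynchronous PDMM converges, its limit is the corresponding component of the saddle
point to which the segment averages converge. -/
theorem stmt16 {m : ℕ} (hm : 0 < m) (D : PDMMData m) (hWF : D.WellFormed)
    (hex : ∃ (x : D.XSp) (δ : D.DeltaSp), D.IsSaddleLp x δ)
    (dPd : ∀ i j, Matrix (Fin (D.ed i j)) (Fin (D.ed i j)) ℝ)
    (hcond : D.Condition1 dPd)
    (xh : ℕ → D.XSp) (Λh : ℕ → D.LamSp)
    (hsteps : ∀ k : ℕ, D.AsynStep ⟨k % m, Nat.mod_lt k hm⟩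
      (xh k) (Λh k) (xh (k + 1)) (Λh (k + 1)))
    (xs : D.XSp) (Λs : D.LamSp) (hsaddle : D.IsSaddleLP xs Λs)
    (hxconv : Tendsto (fun K : ℕ => D.xAvg (fun l => xh (l * m)) K) atTop (nhds xs))
    (hlconv : Tendsto (fun K : ℕ => D.lamAvg (fun l => Λh (l * m)) K) atTop (nhds Λs)) :
    (∀ (u : Fin m) (x' : Fin (D.nd u) → ℝ),
      Tendsto (fun l : ℕ => xh (l * m) u) atTop (nhds x') → x' = xs u) ∧
    (∀ p ∈ D.E,
      (∀ l1 : Fin (D.ed p.1 p.2) → ℝ,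
        Tendsto (fun l : ℕ => (Λh (l * m) p.1 p.2).1) atTop (nhds l1) → l1 = (Λs p.1 p.2).1) ∧
      (∀ l2 : Fin (D.ed p.1 p.2) → ℝ,
        Tendsto (fun l : ℕ => (Λh (l * m) p.1 p.2).2) atTop (nhds l2) → l2 = (Λs p.1 p.2).2)) :=
  stmt16_general D xh Λh xs Λs hxconv hlconv
end
end
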